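/- Local L^p bound for the Whitney extension: let f ∈ L^p_loc(∂Ω) and let F = ∑_{i,j} f_{U_{i,j}} φ_{i,j} be the Whitney extension, where f_{U_{i,j}} is the ν-average of f over U_{i,j} = B(x̂_{i,j}, r_{i,j}) ∩ ∂Ω and {φ_{i,j}} is a partition of unity with 0 ≤ φ_{i,j} ≤ χ_{2B_{i,j}} and ∑φ_{i,j} = 1 on Ω. Then for each Whitney ball B_{l,m}, ∫_{B_{l,m}} |F|^p dμ ≤ C·2^{lθ} ∫_{U*_{l,m}} |f|^p dν, where U*_{l,m} = B(x̂_{l,m}, 2^8 r_{l,m}) ∩ ∂Ω and C depends only on the structural constants. -/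

import Mathlib

open Metric MeasureTheory ENNReal Set

/-!
For `z` in the Whitney ball `B_{l,m}`, only the `φ_{i,j}` with `z ∈ 2B_{i,j}` contribute to `F z`,
and for these the boundary pieces satisfy `U_{i,j} ⊆ U*_{l,m} ⊆ 2⁹ U_{i,j}`. Jensen's inequality
and the doubling property of `ν` bound each `|f_{U_{i,j}}|^p`, hence the convex combination
`|F z|^p`, by `Cd⁹ ⨍_{U*_{l,m}} |f|^p dν`. Integrating over `B_{l,m}` costs the factor
`μ(B_{l,m}) ≲ r_{l,m}^θ ν(U*_{l,m})` given by codimensionality, which cancels the denominator of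
the average.
-/

theorem ofReal_abs_rpow_eq_enorm_rpow {p : ℝ} (hp : 0 ≤ p) (t : ℝ) :
    ENNReal.ofReal (|t| ^ p) = ‖t‖ₑ ^ p := by
  rw [Real.enorm_eq_ofReal_abs, ENNReal.ofReal_rpow_of_nonneg (abs_nonneg t) hp]

theorem enorm_integral_rpow_le_lintegral {α E : Type*} [MeasurableSpace α] [NormedAddCommGroup E]
    [NormedSpace ℝ E] (P : Measure α) [IsProbabilityMeasure P] {f : α → E} {p : ℝ} (hp : 1 ≤ p) :
    ‖∫ x, f x ∂P‖ₑ ^ p ≤ ∫⁻ x, ‖f x‖ₑ ^ p ∂P := by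
  have hp0 : 0 < p := one_pos.trans_le hp
  by_cases hf : AEStronglyMeasurable f P
  swap
  · simp [integral_non_aestronglyMeasurable hf, ENNReal.zero_rpow_of_pos hp0]
  calc ‖∫ x, f x ∂P‖ₑ ^ p ≤ eLpNorm' f 1 P ^ p := by
        gcongr
        simpa [eLpNorm'_eq_lintegral_enorm] using enorm_integral_le_lintegral_enorm f
    _ ≤ eLpNorm' f p P ^ p := by gcongr; exact eLpNorm'_le_eLpNorm'_of_exponent_le one_pos hp P hf
    _ = ∫⁻ x, ‖f x‖ₑ ^ p ∂P := (lintegral_rpow_enorm_eq_rpow_eLpNorm' hp0).symm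

-- Degenerate cases are covered by junk values: the average is `0` when `μ univ ∈ {0, ∞}`.
theorem enorm_average_rpow_le_laverage {α E : Type*} [MeasurableSpace α] [NormedAddCommGroup E]
    [NormedSpace ℝ E] (μ : Measure α) (f : α → E) {p : ℝ} (hp : 1 ≤ p) :
    ‖⨍ x, f x ∂μ‖ₑ ^ p ≤ ⨍⁻ x, ‖f x‖ₑ ^ p ∂μ := by
  rw [average_eq', laverage_eq']
  rcases eq_or_ne (μ univ) 0 with h0 | h0
  · simp [Measure.measure_univ_eq_zero.1 h0, ENNReal.zero_rpow_of_pos (one_pos.trans_le hp)]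
  rcases eq_or_ne (μ univ) ⊤ with htop | htop
  · simp [htop, ENNReal.zero_rpow_of_pos (one_pos.trans_le hp)]
  have : IsFiniteMeasure μ := ⟨htop.lt_top⟩
  have : NeZero μ := ⟨fun h => h0 (by simp [h])⟩
  exact enorm_integral_rpow_le_lintegral _ hp

theorem enorm_tsum_mul_le {ι : Type*} {a w : ι → ℝ} {G : ℝ≥0∞} (hw0 : ∀ i, 0 ≤ w i)
    (hw : HasSum w 1) (ha : ∀ i, w i ≠ 0 → ‖a i‖ₑ ≤ G) : ‖∑' i, a i * w i‖ₑ ≤ G := by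
  refine (tsum_of_enorm_bounded (g := fun i => G * ENNReal.ofReal (w i)) ENNReal.summable.hasSum
    fun i => ?_).trans_eq ?_
  · rcases eq_or_ne (w i) 0 with h | h
    · simp [h]
    · rw [enorm_mul, Real.enorm_of_nonneg (hw0 i)]
      exact mul_le_mul_left (ha i h) _
  · rw [ENNReal.tsum_mul_left, ← ENNReal.ofReal_tsum_of_nonneg hw0 hw.summable, hw.tsum_eq,
      ofReal_one, mul_one]

theorem setLAverage_le_mul_setLAverage {α : Type*} [MeasurableSpace α] {μ : Measure α}
    {s t : Set α} {c : ℝ≥0∞} (hc0 : c ≠ 0) (hc : c ≠ ⊤) (hst : s ⊆ t) (hμ : μ t ≤ c * μ s)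
    (g : α → ℝ≥0∞) : ⨍⁻ x in s, g x ∂μ ≤ c * ⨍⁻ x in t, g x ∂μ := by
  have hinv : (μ s)⁻¹ ≤ c * (μ t)⁻¹ := by
    rw [ENNReal.inv_le_iff_inv_le, ENNReal.mul_inv (.inl hc0) (.inl hc), inv_inv,
      ENNReal.inv_mul_le_iff hc0 hc]
    exact hμ
  simp only [setLAverage_eq, div_eq_mul_inv]
  calc (∫⁻ x in s, g x ∂μ) * (μ s)⁻¹ ≤ (∫⁻ x in t, g x ∂μ) * (c * (μ t)⁻¹) := by
        gcongr
    _ = c * ((∫⁻ x in t, g x ∂μ) * (μ t)⁻¹) := by ring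

theorem measure_ball_two_pow_mul_le {X : Type*} [PseudoMetricSpace X] [MeasurableSpace X]
    {μ : Measure X} {C : ℝ≥0∞}
    (hdbl : ∀ (z : X) (ρ : ℝ), 0 < ρ → μ (ball z (2 * ρ)) ≤ C * μ (ball z ρ))
    (n : ℕ) (z : X) {ρ : ℝ} (hρ : 0 < ρ) : μ (ball z (2 ^ n * ρ)) ≤ C ^ n * μ (ball z ρ) := by
  induction n with
  | zero => simp
  | succ n ih =>
    calc μ (ball z (2 ^ (n + 1) * ρ)) = μ (ball z (2 * (2 ^ n * ρ))) := by ring_nf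
      _ ≤ C * μ (ball z (2 ^ n * ρ)) := hdbl z _ (by positivity)
      _ ≤ C * (C ^ n * μ (ball z ρ)) := by gcongr
      _ = C ^ (n + 1) * μ (ball z ρ) := by ring

theorem whitney_foot_ball_subset {X : Type*} [PseudoMetricSpace X] {S : Set X} {a a' b b' : X}
    {ρ σ : ℝ} (ha' : dist a a' = infDist a S) (hρ : ρ = infDist a S / 8)
    (hb' : dist b b' = infDist b S) (hσ : σ = infDist b S / 8)
    (hab : (ball a (2 * ρ) ∩ ball b σ).Nonempty) :
    ball a' ρ ⊆ ball b' (2 ^ 8 * σ) ∧ ball b' (2 ^ 8 * σ) ⊆ ball a' (2 ^ 9 * ρ) := by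
  obtain ⟨z, hza, hzb⟩ := hab
  rw [mem_ball] at hza hzb
  have hab : dist a b < 2 * ρ + σ := by linarith [dist_triangle_left a b z]
  have hfeet : dist a' b' ≤ dist a a' + dist a b + dist b b' := by
    linarith [dist_triangle4 a' a b b', dist_comm a' a]
  -- `infDist · S` is 1-Lipschitz, so the radii of the two balls are comparable.
  have hσρ : 7 * σ ≤ 10 * ρ := by
    linarith [infDist_le_infDist_add_dist (x := b) (y := a) (s := S), dist_comm b a]
  have hρσ : 2 * ρ ≤ 3 * σ := by
    linarith [infDist_le_infDist_add_dist (x := a) (y := b) (s := S)]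
  have hσ0 : 0 ≤ σ := dist_nonneg.trans hzb.le
  refine ⟨ball_subset_ball' ?_, ball_subset_ball' ?_⟩
  · linarith
  · rw [dist_comm]; linarith

theorem enorm_setAverage_rpow_le_of_balls_meet {X E : Type*} [PseudoMetricSpace X]
    [MeasurableSpace X] [OpensMeasurableSpace X] [NormedAddCommGroup E] [NormedSpace ℝ E]
    {S : Set X} {ν : Measure X} {Cd : ℝ≥0∞} (hCd0 : Cd ≠ 0) (hCd : Cd ≠ ⊤)
    (hdbl : ∀ (z : X) (ρ : ℝ), 0 < ρ → ν (ball z (2 * ρ) ∩ S) ≤ Cd * ν (ball z ρ ∩ S))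
    {a a' b b' : X} {ρ σ : ℝ} (ha' : dist a a' = infDist a S) (hρ : ρ = infDist a S / 8)
    (hb' : dist b b' = infDist b S) (hσ : σ = infDist b S / 8)
    (hab : (ball a (2 * ρ) ∩ ball b σ).Nonempty) (f : X → E) {p : ℝ} (hp : 1 ≤ p) :
    ‖⨍ ξ in ball a' ρ ∩ S, f ξ ∂ν‖ₑ ^ p
      ≤ Cd ^ 9 * ⨍⁻ ξ in ball b' (2 ^ 8 * σ) ∩ S, ‖f ξ‖ₑ ^ p ∂ν := by
  have hρ0 : 0 < ρ := by
    obtain ⟨z, hz, -⟩ := hab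
    linarith [dist_nonneg.trans_lt (mem_ball.1 hz)]
  obtain ⟨hsub, hsup⟩ := whitney_foot_ball_subset ha' hρ hb' hσ hab
  have hdbl9 : ν (ball a' (2 ^ 9 * ρ) ∩ S) ≤ Cd ^ 9 * ν (ball a' ρ ∩ S) := by
    simpa only [Measure.restrict_apply measurableSet_ball] using
      measure_ball_two_pow_mul_le (μ := ν.restrict S)
        (by simpa only [Measure.restrict_apply measurableSet_ball] using hdbl) 9 a' hρ0
  exact (enorm_average_rpow_le_laverage _ _ hp).trans <|
    setLAverage_le_mul_setLAverage (pow_ne_zero _ hCd0) (by finiteness)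
      (inter_subset_inter_left S hsub)
      ((measure_mono (inter_subset_inter_left S hsup)).trans hdbl9) _

theorem measure_le_of_codim_lower_bound {X : Type*} [PseudoMetricSpace X] [MeasurableSpace X]
    {μ ν : Measure X} {Ω S A : Set X} {Cs : ℝ≥0∞} {θ R : ℝ} {ζ : X} (hzero : μ Ωᶜ = 0)
    (hCs0 : Cs ≠ 0) (hCs : Cs ≠ ⊤) (hR : 0 < R)
    (hcodim : Cs⁻¹ * (μ (ball ζ R ∩ Ω) / ENNReal.ofReal (R ^ θ)) ≤ ν (ball ζ R ∩ S))
    (hA : A ⊆ ball ζ R) : μ A ≤ Cs * ENNReal.ofReal (R ^ θ) * ν (ball ζ R ∩ S) := by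
  have he : ENNReal.ofReal (R ^ θ) ≠ 0 := by simpa using Real.rpow_pos_of_pos hR θ
  rw [ENNReal.inv_mul_le_iff hCs0 hCs, ENNReal.div_le_iff he ofReal_ne_top] at hcodim
  calc μ A = μ (A ∩ Ω) := (measure_inter_conull hzero).symm
    _ ≤ μ (ball ζ R ∩ Ω) := measure_mono (inter_subset_inter_left _ hA)
    _ ≤ Cs * ENNReal.ofReal (R ^ θ) * ν (ball ζ R ∩ S) := hcodim.trans_eq (by ring)

theorem ofReal_mul_rpow_le_mul_two_rpow {c r θ : ℝ} {l : ℤ} (hc : 0 ≤ c) (hr : 0 ≤ r)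
    (hrl : r ≤ 2 ^ l) (hθ : 0 ≤ θ) :
    ENNReal.ofReal ((c * r) ^ θ) ≤ ENNReal.ofReal (c ^ θ) * 2 ^ ((l : ℝ) * θ) := by
  rw [Real.mul_rpow hc hr, ENNReal.ofReal_mul (by positivity)]
  calc ENNReal.ofReal (c ^ θ) * ENNReal.ofReal (r ^ θ)
      ≤ ENNReal.ofReal (c ^ θ) * ENNReal.ofReal (((2 : ℝ) ^ (l : ℝ)) ^ θ) := by
        rw [Real.rpow_intCast]; gcongr
    _ = ENNReal.ofReal (c ^ θ) * 2 ^ ((l : ℝ) * θ) := by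
        rw [← Real.rpow_mul zero_le_two, ← ENNReal.ofReal_rpow_of_pos two_pos, ofReal_ofNat]

theorem setLIntegral_le_mul_of_ae_le_setLAverage {α β : Type*} [MeasurableSpace α]
    [MeasurableSpace β] {μ : Measure α} {ν : Measure β} {s : Set α} {t : Set β}
    {G : α → ℝ≥0∞} {g : β → ℝ≥0∞} {c K : ℝ≥0∞}
    (hG : ∀ᵐ z ∂μ.restrict s, G z ≤ c * ⨍⁻ ξ in t, g ξ ∂ν) (hs : μ s ≤ K * ν t) :
    ∫⁻ z in s, G z ∂μ ≤ c * K * ∫⁻ ξ in t, g ξ ∂ν :=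
  calc ∫⁻ z in s, G z ∂μ ≤ (c * ⨍⁻ ξ in t, g ξ ∂ν) * μ s :=
        (lintegral_mono_ae hG).trans_eq (setLIntegral_const _ _)
    _ ≤ (c * ⨍⁻ ξ in t, g ξ ∂ν) * (K * ν t) := by gcongr
    _ = c * K * (ν t * ⨍⁻ ξ in t, g ξ ∂ν) := by ring
    _ ≤ c * K * ∫⁻ ξ in t, g ξ ∂ν := by
        gcongr
        rw [setLAverage_eq]
        exact ENNReal.mul_div_le

theorem whitney_extension_local_Lp_bound_general
    {X : Type*} [MetricSpace X] [MeasurableSpace X] [BorelSpace X]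
    (Ω S : Set X) (μ ν : Measure X)
    (p θ : ℝ) (hp : 1 ≤ p) (hθ : 0 < θ)
    (Cs Cd : ℝ≥0∞) (hCs : 1 ≤ Cs) (hCs' : Cs ≠ ⊤) (hCd : 1 ≤ Cd) (hCd' : Cd ≠ ⊤)
    (hdblν : ∀ (z : X) (ρ : ℝ), 0 < ρ → ν (ball z (2 * ρ) ∩ S) ≤ Cd * ν (ball z ρ ∩ S))
    (hzero : μ Ωᶜ = 0)
    (hcodim : ∀ ζ ∈ S, ∀ ρ : ℝ, 0 < ρ →
      Cs⁻¹ * (μ (ball ζ ρ ∩ Ω) / ENNReal.ofReal (ρ ^ θ)) ≤ ν (ball ζ ρ ∩ S) ∧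
      ν (ball ζ ρ ∩ S) ≤ Cs * (μ (ball ζ ρ ∩ Ω) / ENNReal.ofReal (ρ ^ θ)))
    (x xh : ℤ × ℕ → X) (r : ℤ × ℕ → ℝ)
    (hrad : ∀ ij : ℤ × ℕ, (2 : ℝ) ^ (ij.1 - 1) < r ij ∧ r ij ≤ (2 : ℝ) ^ ij.1)
    (hwhit : ∀ ij, r ij = infDist (x ij) S / 8)
    (hxh : ∀ ij, xh ij ∈ S ∧ dist (x ij) (xh ij) = infDist (x ij) S)
    (φ : ℤ × ℕ → X → ℝ)
    (hφ0 : ∀ ij z, 0 ≤ φ ij z)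
    (hφ1 : ∀ ij, ∀ z ∉ ball (x ij) (2 * r ij), φ ij z = 0)
    (hφsum : ∀ z ∈ Ω, HasSum (fun ij => φ ij z) 1)
    (f : X → ℝ)
    (F : X → ℝ)
    (hF : ∀ z, F z = ∑' ij : ℤ × ℕ, (⨍ ξ in ball (xh ij) (r ij) ∩ S, f ξ ∂ν) * φ ij z) :
    ∃ C : ℝ≥0∞, C ≠ ⊤ ∧ ∀ lm : ℤ × ℕ,
      ∫⁻ z in ball (x lm) (r lm), ENNReal.ofReal (|F z| ^ p) ∂μ
        ≤ C * (2 : ℝ≥0∞) ^ ((lm.1 : ℝ) * θ)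
            * ∫⁻ ξ in ball (xh lm) ((2 : ℝ) ^ 8 * r lm) ∩ S,
                ENNReal.ofReal (|f ξ| ^ p) ∂ν := by
  have hp0 : 0 < p := one_pos.trans_le hp
  have hr : ∀ ij, 0 < r ij := fun ij => (_root_.zpow_pos two_pos _).trans (hrad ij).1
  refine ⟨Cs * Cd ^ 9 * ENNReal.ofReal (((2 : ℝ) ^ 8) ^ θ), by finiteness, fun lm => ?_⟩
  simp only [ofReal_abs_rpow_eq_enorm_rpow hp0.le]
  set Ustar := ball (xh lm) ((2 : ℝ) ^ 8 * r lm) ∩ S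
  have hF_le : ∀ᵐ z ∂μ.restrict (ball (x lm) (r lm)),
      ‖F z‖ₑ ^ p ≤ Cd ^ 9 * ⨍⁻ ξ in Ustar, ‖f ξ‖ₑ ^ p ∂ν := by
    filter_upwards [ae_restrict_mem measurableSet_ball, ae_restrict_of_ae (mem_ae_iff.2 hzero)]
      with z hzB hzΩ
    rw [hF z, ← ENNReal.le_rpow_inv_iff hp0]
    refine enorm_tsum_mul_le (hφ0 · z) (hφsum z hzΩ) fun ij hφz => ?_
    rw [ENNReal.le_rpow_inv_iff hp0]
    exact enorm_setAverage_rpow_le_of_balls_meet (one_pos.trans_le hCd).ne' hCd' hdblν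
      (hxh ij).2 (hwhit ij) (hxh lm).2 (hwhit lm)
      ⟨z, by_contra fun h => hφz (hφ1 ij z h), hzB⟩ f hp
  have hμB : μ (ball (x lm) (r lm))
      ≤ Cs * (ENNReal.ofReal (((2 : ℝ) ^ 8) ^ θ) * 2 ^ ((lm.1 : ℝ) * θ)) * ν Ustar := by
    refine (measure_le_of_codim_lower_bound (R := 2 ^ 8 * r lm) hzero (one_pos.trans_le hCs).ne'
      hCs' (by positivity [hr lm]) (hcodim (xh lm) (hxh lm).1 _ (by positivity [hr lm])).1
      (ball_subset_ball' (by linarith [(hxh lm).2, hwhit lm, hr lm]))).trans ?_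
    gcongr
    exact ofReal_mul_rpow_le_mul_two_rpow (by positivity) (hr lm).le (hrad lm).2 hθ.le
  calc _ ≤ _ := setLIntegral_le_mul_of_ae_le_setLAverage hF_le hμB
    _ = _ := by ring

/-- Local `L^p` bound for the Whitney extension: for each Whitney ball `B_{l,m}`,
`∫_{B_{l,m}} |F|^p dμ ≤ C 2^{lθ} ∫_{U*_{l,m}} |f|^p dν`, where
`F = ∑ f_{U_{i,j}} φ_{i,j}` is the Whitney extension of `f ∈ L^p_loc(∂Ω)` and
`U*_{l,m} = B(x̂_{l,m}, 2^8 r_{l,m}) ∩ ∂Ω`. -/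
theorem whitney_extension_local_Lp_bound
    {X : Type*} [MetricSpace X] [MeasurableSpace X] [BorelSpace X]
    (Ω S : Set X) (μ ν : Measure X)
    (p θ : ℝ) (hp : 1 ≤ p) (hθ : 0 < θ) (hθp : θ < p)
    (Cs Cd : ℝ≥0∞) (hCs : 1 ≤ Cs) (hCs' : Cs ≠ ⊤) (hCd : 1 ≤ Cd) (hCd' : Cd ≠ ⊤)
    (hdblμ : ∀ (z : X) (ρ : ℝ), 0 < ρ → μ (ball z (2 * ρ)) ≤ Cd * μ (ball z ρ))
    (hdblν : ∀ (z : X) (ρ : ℝ), 0 < ρ → ν (ball z (2 * ρ) ∩ S) ≤ Cd * ν (ball z ρ ∩ S))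
    (hzero : μ Ωᶜ = 0)
    (hcodim : ∀ ζ ∈ S, ∀ ρ : ℝ, 0 < ρ →
      Cs⁻¹ * (μ (ball ζ ρ ∩ Ω) / ENNReal.ofReal (ρ ^ θ)) ≤ ν (ball ζ ρ ∩ S) ∧
      ν (ball ζ ρ ∩ S) ≤ Cs * (μ (ball ζ ρ ∩ Ω) / ENNReal.ofReal (ρ ^ θ)))
    (x xh : ℤ × ℕ → X) (r : ℤ × ℕ → ℝ)
    (hrad : ∀ ij : ℤ × ℕ, (2 : ℝ) ^ (ij.1 - 1) < r ij ∧ r ij ≤ (2 : ℝ) ^ ij.1)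
    (hwhit : ∀ ij, r ij = infDist (x ij) S / 8)
    (hxh : ∀ ij, xh ij ∈ S ∧ dist (x ij) (xh ij) = infDist (x ij) S)
    (hcover : Ω ⊆ ⋃ ij, ball (x ij) (r ij))
    (φ : ℤ × ℕ → X → ℝ)
    (hφ0 : ∀ ij z, 0 ≤ φ ij z)
    (hφ1 : ∀ ij, ∀ z ∉ ball (x ij) (2 * r ij), φ ij z = 0)
    (hφsum : ∀ z ∈ Ω, HasSum (fun ij => φ ij z) 1)
    (hφov : ∀ z : X, {ij : ℤ × ℕ | z ∈ ball (x ij) (2 * r ij)}.Finite)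
    (f : X → ℝ)
    (hf : ∀ ij, IntegrableOn f (ball (xh ij) ((2 : ℝ) ^ 8 * r ij) ∩ S) ν)
    (F : X → ℝ)
    (hF : ∀ z, F z = ∑' ij : ℤ × ℕ, (⨍ ξ in ball (xh ij) (r ij) ∩ S, f ξ ∂ν) * φ ij z) :
    ∃ C : ℝ≥0∞, C ≠ ⊤ ∧ ∀ lm : ℤ × ℕ,
      ∫⁻ z in ball (x lm) (r lm), ENNReal.ofReal (|F z| ^ p) ∂μ
        ≤ C * (2 : ℝ≥0∞) ^ ((lm.1 : ℝ) * θ)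
            * ∫⁻ ξ in ball (xh lm) ((2 : ℝ) ^ 8 * r lm) ∩ S,
                ENNReal.ofReal (|f ξ| ^ p) ∂ν :=
  whitney_extension_local_Lp_bound_general Ω S μ ν p θ hp hθ Cs Cd hCs hCs' hCd hCd' hdblν hzero
    hcodim x xh r hrad hwhit hxh φ hφ0 hφ1 hφsum f F hF
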